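/- For any set a: pot(a) ⊆ levof(a), and a ∉ levof(a). -/

import Mathlib

/-!
Members of a history are transitive (`pot` of a set of transitive sets is transitive) and are
levels themselves, so every level `s` equals `pot` of the set of levels it contains. Every set `a`
lies below some level: by ∈-induction pick levels `s x ⊇ x` for `x ∈ a`; the levels inside the
transitive set `⋃ x ∈ a, 𝒫 (s x)` form a history whose `pot` contains `a`. For the ∈-least such
level `L = levof a`, potency of `L` gives `pot a ⊆ L`, while `a ∈ L = pot (levels in L)` would put
`a` below a level belonging to `L`, against minimality.
-/

def pot (a : ZFSet) : ZFSet :=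
  ZFSet.sep (fun x => ∃ c ∈ a, x ⊆ c) (ZFSet.powerset (ZFSet.sUnion a))

def Potent (a : ZFSet) : Prop := ∀ x, (∃ c, x ⊆ c ∧ c ∈ a) → x ∈ a

def IsHistory (h : ZFSet) : Prop := ∀ x ∈ h, x = pot (x ∩ h)

def IsLevel (s : ZFSet) : Prop := ∃ h, IsHistory h ∧ s = pot h

noncomputable def levof (a : ZFSet) : ZFSet :=
  Classical.epsilon (fun s => IsLevel s ∧ a ⊆ s ∧ ∀ t, IsLevel t → a ⊆ t → t ∉ s)

open ZFSet

theorem mem_pot {x a : ZFSet} : x ∈ pot a ↔ ∃ c ∈ a, x ⊆ c := by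
  refine ⟨fun hx => (mem_sep.1 hx).2, fun ⟨c, hc, hxc⟩ => mem_sep.2 ⟨?_, c, hc, hxc⟩⟩
  exact mem_powerset.2 fun z hz => mem_sUnion.2 ⟨c, hc, hxc hz⟩

theorem pot_mono {a b : ZFSet} (h : a ⊆ b) : pot a ⊆ pot b := fun _ hx =>
  let ⟨c, hc, hxc⟩ := mem_pot.1 hx
  mem_pot.2 ⟨c, h hc, hxc⟩

theorem subset_pot (a : ZFSet) : a ⊆ pot a := fun x hx => mem_pot.2 ⟨x, hx, subset_rfl⟩

theorem potent_pot (a : ZFSet) : Potent (pot a) := by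
  rintro x ⟨c, hxc, hc⟩
  obtain ⟨d, hd, hcd⟩ := mem_pot.1 hc
  exact mem_pot.2 ⟨d, hd, fun z hz => hcd (hxc hz)⟩

theorem pot_subset_of_potent {a s : ZFSet} (hs : Potent s) (h : a ⊆ s) : pot a ⊆ s := fun x hx =>
  let ⟨c, hc, hxc⟩ := mem_pot.1 hx
  hs x ⟨c, hxc, h hc⟩

theorem isTransitive_pot {a : ZFSet} (h : ∀ c ∈ a, c.IsTransitive) : (pot a).IsTransitive := by
  intro x hx y hy
  obtain ⟨c, hc, hxc⟩ := mem_pot.1 hx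
  exact mem_pot.2 ⟨c, hc, (h c hc).subset_of_mem (hxc hy)⟩

namespace IsHistory

theorem isTransitive_of_mem {h x : ZFSet} (hh : IsHistory h) (hx : x ∈ h) : x.IsTransitive := by
  induction x using ZFSet.inductionOn with
  | _ x ih =>
    rw [hh x hx]
    exact isTransitive_pot fun c hc => ih c (mem_inter.1 hc).1 (mem_inter.1 hc).2

theorem inter {h x : ZFSet} (hh : IsHistory h) (hx : x.IsTransitive) : IsHistory (x ∩ h) := by
  intro y hy
  obtain ⟨hyx, hyh⟩ := mem_inter.1 hy
  have hrestrict : y ∩ (x ∩ h) = y ∩ h := by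
    ext z
    simp only [mem_inter]
    exact ⟨fun hz => ⟨hz.1, hz.2.2⟩, fun hz => ⟨hz.1, hx.mem_trans hz.1 hyx, hz.2⟩⟩
  rw [hrestrict]
  exact hh y hyh

theorem isLevel_of_mem {h x : ZFSet} (hh : IsHistory h) (hx : x ∈ h) : IsLevel x :=
  ⟨x ∩ h, hh.inter (hh.isTransitive_of_mem hx), hh x hx⟩

end IsHistory

namespace IsLevel

theorem isTransitive {s : ZFSet} (hs : IsLevel s) : s.IsTransitive := by
  obtain ⟨h, hh, rfl⟩ := hs
  exact isTransitive_pot fun c hc => hh.isTransitive_of_mem hc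

theorem potent {s : ZFSet} (hs : IsLevel s) : Potent s := by
  obtain ⟨h, -, rfl⟩ := hs
  exact potent_pot h

end IsLevel

def lvls (s : ZFSet) : ZFSet := ZFSet.sep IsLevel s

theorem mem_lvls {x s : ZFSet} : x ∈ lvls s ↔ x ∈ s ∧ IsLevel x := ZFSet.mem_sep

theorem IsLevel.eq_pot_lvls {s : ZFSet} (hs : IsLevel s) : s = pot (lvls s) := by
  obtain ⟨h, hh, rfl⟩ := hs
  have hsub : h ⊆ lvls (pot h) := fun _ hx => mem_lvls.2 ⟨subset_pot h hx, hh.isLevel_of_mem hx⟩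
  exact subset_antisymm (pot_mono hsub)
    (pot_subset_of_potent (potent_pot h) fun _ hx => (mem_lvls.1 hx).1)

theorem isHistory_lvls {U : ZFSet} (hU : U.IsTransitive) : IsHistory (lvls U) := by
  intro t ht
  obtain ⟨htU, htl⟩ := mem_lvls.1 ht
  have hrestrict : t ∩ lvls U = lvls t := by
    ext z
    simp only [mem_inter, mem_lvls]
    exact ⟨fun hz => ⟨hz.1, hz.2.2⟩, fun hz => ⟨hz.1, hU.mem_trans hz.1 htU, hz.2⟩⟩
  rw [hrestrict]
  exact htl.eq_pot_lvls

theorem exists_isLevel_superset (a : ZFSet) : ∃ s, IsLevel s ∧ a ⊆ s := by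
  induction a using ZFSet.inductionOn with
  | _ a ih =>
    choose! s hs hxs using ih
    let U := ⋃ x : a, powerset (s x)
    have hU : U.IsTransitive := IsTransitive.iUnion fun x => (hs x x.2).isTransitive.powerset
    refine ⟨pot (lvls U), ⟨_, isHistory_lvls hU, rfl⟩, fun x hx => mem_pot.2 ⟨s x, ?_, hxs x hx⟩⟩
    exact mem_lvls.2 ⟨mem_iUnion.2 ⟨⟨x, hx⟩, mem_powerset.2 subset_rfl⟩, hs x hx⟩

theorem levof_spec (a : ZFSet) :
    IsLevel (levof a) ∧ a ⊆ levof a ∧ ∀ t, IsLevel t → a ⊆ t → t ∉ levof a := by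
  obtain ⟨s, hs⟩ := exists_isLevel_superset a
  obtain ⟨m, ⟨hm, ham⟩, hmin⟩ := mem_wf.has_min {s | IsLevel s ∧ a ⊆ s} ⟨s, hs⟩
  exact Classical.epsilon_spec (p := fun L => IsLevel L ∧ a ⊆ L ∧ ∀ t, IsLevel t → a ⊆ t → t ∉ L)
    ⟨m, hm, ham, fun t ht hat => hmin t ⟨ht, hat⟩⟩

theorem stmt9 (a : ZFSet) : pot a ⊆ levof a ∧ a ∉ levof a := by
  obtain ⟨hl, hsub, hmin⟩ := levof_spec a
  refine ⟨pot_subset_of_potent hl.potent hsub, fun ha => ?_⟩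
  rw [hl.eq_pot_lvls] at ha
  obtain ⟨u, hu, hau⟩ := mem_pot.1 ha
  exact hmin u (mem_lvls.1 hu).2 hau (mem_lvls.1 hu).1
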